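/- arXiv:2107.00794 — 7 statements merged into one kernel-verified Lean document; each statement's English description precedes it below -/
import Mathlib

section
/- Let $R=\mathbb{Z}[z_1^{\pm 1},\ldots,z_n^{\pm 1}]$ be the Laurent polynomial ring in $n$ variables over $\mathbb{Z}$, let $M$ be an $R$-module, let $N \subseteq M$ be an $R$-submodule, and let $m_1,\ldots,m_n \in M$. Assume that $z_1^d \cdot m_1 + \cdots + z_n^d \cdot m_n \in N$ for all integers $d \geq 1$. Then $m_1+\cdots+m_n \in N$. -/
/-- The Laurent polynomial ring `ℤ[z₁^{±1},…,zₙ^{±1}]`, realized as the group ring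
of `ℤⁿ` over `ℤ`. -/
abbrev LaurentRing (n : ℕ) : Type := AddMonoidAlgebra ℤ (Fin n → ℤ)

/-- The variable `zᵢ`, a unit of the Laurent polynomial ring. -/
noncomputable def laurentVar {n : ℕ} (i : Fin n) : LaurentRing n :=
  AddMonoidAlgebra.single (Pi.single i 1) 1

/-!
If `a₁, …, aₙ` are units, the polynomial `p = ∏ᵢ (1 - aᵢ⁻¹ X)` has constant term `1` and vanishes
at every `aⱼ`; writing `p = 1 + X q` gives `aⱼ q(aⱼ) = -1` for all `j`. Hence
`∑ m_j = -∑ⱼ aⱼ q(aⱼ) • mⱼ`, and the right-hand side is an `R`-combination of the power sums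
`∑ⱼ aⱼ^d • mⱼ` with `d ≥ 1`, all of which lie in `N`.
-/

open Polynomial

lemma laurentVar_isUnit {n : ℕ} (i : Fin n) : IsUnit (laurentVar i) := by
  refine isUnit_iff_exists_inv.2 ⟨AddMonoidAlgebra.single (-(Pi.single i 1)) 1, ?_⟩
  rw [laurentVar, AddMonoidAlgebra.single_mul_single, add_neg_cancel, one_mul,
    ← AddMonoidAlgebra.one_def]

section

variable {R M ι : Type*} [CommRing R] [AddCommGroup M] [Module R M] [Fintype ι]

lemma exists_polynomial_forall_mul_eval_eq_neg_one (a : ι → Rˣ) :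
    ∃ q : R[X], ∀ j, (a j : R) * q.eval (a j : R) = -1 := by
  classical
  set p : R[X] := ∏ i, (1 - C (↑(a i)⁻¹ : R) * X) with hp
  have hcoeff : p.coeff 0 = 1 := by simp [hp, coeff_zero_eq_eval_zero, eval_prod]
  refine ⟨p.divX, fun j => ?_⟩
  have hroot : p.eval (a j : R) = 0 := by
    rw [hp, eval_prod]
    exact Finset.prod_eq_zero (Finset.mem_univ j) (by simp)
  have hsplit := congrArg (eval (a j : R)) (X_mul_divX_add p)
  rw [eval_add, eval_mul, eval_X, eval_C, hcoeff, hroot] at hsplit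
  linear_combination hsplit

lemma sum_mul_eval_smul_mem {N : Submodule R M} (a : ι → R) (m : ι → M)
    (h : ∀ d : ℕ, 1 ≤ d → ∑ i, (a i ^ d) • m i ∈ N) (q : R[X]) :
    ∑ i, (a i * q.eval (a i)) • m i ∈ N := by
  induction q using Polynomial.induction_on' with
  | add p q hp hq =>
    simpa only [eval_add, mul_add, add_smul, Finset.sum_add_distrib] using N.add_mem hp hq
  | monomial k c =>
    have hmono : ∑ i, (a i * (monomial k c).eval (a i)) • m i =
        c • ∑ i, (a i ^ (k + 1)) • m i := by
      simp only [eval_monomial, Finset.smul_sum, smul_smul, pow_succ]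
      congr! 2
      ring
    rw [hmono]
    exact N.smul_mem c (h _ k.succ_pos)

theorem sum_mem_of_forall_sum_pow_smul_mem {N : Submodule R M} (a : ι → Rˣ) (m : ι → M)
    (h : ∀ d : ℕ, 1 ≤ d → ∑ i, ((a i : R) ^ d) • m i ∈ N) :
    ∑ i, m i ∈ N := by
  obtain ⟨q, hq⟩ := exists_polynomial_forall_mul_eval_eq_neg_one a
  simpa [hq] using N.neg_mem (sum_mul_eval_smul_mem _ m h q)

end

theorem stmt0 (n : ℕ) (M : Type) [AddCommGroup M] [Module (LaurentRing n) M]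
    (N : Submodule (LaurentRing n) M) (m : Fin n → M)
    (h : ∀ d : ℕ, 1 ≤ d → (∑ i : Fin n, (laurentVar i ^ d) • m i) ∈ N) :
    (∑ i : Fin n, m i) ∈ N :=
  sum_mem_of_forall_sum_pow_smul_mem (fun i => (laurentVar_isUnit i).unit) m h
end

section
/- Let $k$ be an infinite field and let $\mathbb{F}$ be an arbitrary field. Then the Steinberg representation $\mathrm{St}(\mathrm{GL}_2;\mathbb{F})$ is an irreducible representation of $\mathrm{GL}_2(k)$: it is nonzero, and every $\mathrm{GL}_2(k)$-stable $\mathbb{F}$-subspace of $\mathrm{St}(\mathrm{GL}_2;\mathbb{F})$ is either $0$ or all of $\mathrm{St}(\mathrm{GL}_2;\mathbb{F})$. -/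
abbrev ProjLine (k : Type) [Field k] : Type := Projectivization k (Fin 2 → k)

noncomputable def augmentation (X : Type) (F : Type) [Field F] : (X →₀ F) →ₗ[F] F :=
  Finsupp.linearCombination F (fun _ => (1 : F))

noncomputable def SteinbergGL2 (k F : Type) [Field k] [Field F] :
    Submodule F (ProjLine k →₀ F) :=
  LinearMap.ker (augmentation (ProjLine k) F)

noncomputable def glPoint {k : Type} [Field k] (g : GL (Fin 2) k) :
    ProjLine k → ProjLine k :=
  Projectivization.map
    ((Matrix.GeneralLinearGroup.toLin g).toLinearEquiv :
      (Fin 2 → k) →ₗ[k] (Fin 2 → k))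
    (Matrix.GeneralLinearGroup.toLin g).toLinearEquiv.injective

/-!
Identify `F[k]` with `St` through `δ_t ↦ [t] - [∞]`. This is equivariant for the affine maps
`t ↦ s t + β`, which fix `∞`, so the preimage in `F[k]` of a `GL₂(k)`-stable subspace `V` is an
ideal. Moving a point of the support of a nonzero element of `V` to `∞` produces `y ∈ F[k]` with
nonzero augmentation whose image lies in `V`; the ideal then contains every dilation of `y`.
If these dilations generated a proper ideal, a maximal ideal above them would give an additive
character `ψ` of `k` with `∑ y_γ ψ(γ s) = 0` for all `s ≠ 0`. Since the augmentation of `y` is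
nonzero, `ψ` is nontrivial, and Artin's independence argument, which needs `k` infinite, rules
the relation out. Hence `[0] - [∞] ∈ V`, and 2-transitivity gives every `[p] - [q]`; these span
`St`.
-/

open Projectivization

section ProjectiveLine

variable {k : Type} [Field k]

lemma glPoint_eq_smul (g : GL (Fin 2) k) (p : ProjLine k) : glPoint g p = g • p := by
  induction p using Projectivization.ind with
  | h v hv =>
    rw [glPoint, Projectivization.map_mk, smul_mk]
    rfl

lemma glPoint_injective (g : GL (Fin 2) k) : Function.Injective (glPoint g) := by
  simpa only [funext (glPoint_eq_smul g)] using MulAction.injective g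

lemma toGL_smul (g : Matrix.SpecialLinearGroup (Fin 2) k) (p : ProjLine k) :
    (g : GL (Fin 2) k) • p = g • p := by
  induction p using Projectivization.ind with
  | h v hv =>
    rw [smul_mk, matrixSpecialLinearGroup_smul_def, smul_mk]
    rfl

lemma exists_glPoint_eq (p q : ProjLine k) : ∃ g : GL (Fin 2) k, glPoint g p = q := by
  obtain ⟨g, hg⟩ := MulAction.exists_smul_eq (Matrix.SpecialLinearGroup (Fin 2) k) p q
  exact ⟨g, by rw [glPoint_eq_smul, toGL_smul, hg]⟩

lemma exists_glPoint_eq_pair {p q p' q' : ProjLine k} (h : p ≠ q) (h' : p' ≠ q') :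
    ∃ g : GL (Fin 2) k, glPoint g p = p' ∧ glPoint g q = q' := by
  obtain ⟨g, hp, hq⟩ := MulAction.is_two_pretransitive_iff.mp
    (inferInstance : MulAction.IsMultiplyPretransitive (Matrix.SpecialLinearGroup (Fin 2) k)
      (ProjLine k) 2) h h'
  exact ⟨g, by rw [glPoint_eq_smul, toGL_smul, hp], by rw [glPoint_eq_smul, toGL_smul, hq]⟩

namespace ProjLine

def affinePoint (t : k) : ProjLine k := mk k ![t, 1] (by simp)

def infty : ProjLine k := mk k ![1, 0] (by simp)

lemma affinePoint_ne_infty (t : k) : affinePoint t ≠ infty := by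
  classical
  exact (OnePoint.equivProjectivization k).injective.ne (OnePoint.coe_ne_infty t)

lemma eq_infty_or_exists_eq_affinePoint (p : ProjLine k) :
    p = infty ∨ ∃ t : k, p = affinePoint t := by
  classical
  obtain ⟨x, rfl⟩ := (OnePoint.equivProjectivization k).surjective p
  cases x with
  | infty => exact Or.inl rfl
  | coe t => exact Or.inr ⟨t, rfl⟩

end ProjLine

open ProjLine

def affineGL (s β : k) (hs : s ≠ 0) : GL (Fin 2) k :=
  Matrix.GeneralLinearGroup.mkOfDetNeZero !![s, β; 0, 1] (by simpa [Matrix.det_fin_two_of])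

lemma glPoint_affineGL_affinePoint (s β t : k) (hs : s ≠ 0) :
    glPoint (affineGL s β hs) (affinePoint t) = affinePoint (s * t + β) := by
  classical
  change glPoint _ (OnePoint.equivProjectivization k t) =
    OnePoint.equivProjectivization k ↑(s * t + β)
  rw [glPoint_eq_smul, ← OnePoint.equivProjectivization_smul, OnePoint.smul_some_eq_ite]
  simp [affineGL, Matrix.GeneralLinearGroup.mkOfDetNeZero]

lemma glPoint_affineGL_infty (s β : k) (hs : s ≠ 0) :
    glPoint (affineGL s β hs) infty = infty := by
  classical
  change glPoint _ (OnePoint.equivProjectivization k OnePoint.infty) =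
    OnePoint.equivProjectivization k OnePoint.infty
  rw [glPoint_eq_smul, ← OnePoint.equivProjectivization_smul, OnePoint.smul_infty_eq_self_iff.mpr]
  simp [affineGL, Matrix.GeneralLinearGroup.mkOfDetNeZero]

end ProjectiveLine

section Characters

open Filter

variable {k K : Type} [Field k] [CommRing K] [IsDomain K]

lemma AddChar.not_eventually_sum_mul_eq_zero [Infinite k] {ψ : AddChar k K} (hψ : ψ ≠ 1)
    (S : Finset k) {c : k → K} (hc : ∃ γ ∈ S, c γ ≠ 0) :
    ¬ ∀ᶠ s in cofinite, ∑ γ ∈ S, c γ * ψ (γ * s) = 0 := by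
  classical
  induction S using Finset.strongInduction generalizing c with
  | H S ih =>
  obtain ⟨γ₁, hγ₁, hc₁⟩ := hc
  intro hvanish
  by_cases honly : ∀ γ ∈ S.erase γ₁, c γ = 0
  · obtain ⟨s, hs⟩ := hvanish.exists
    rw [← Finset.add_sum_erase S _ hγ₁,
      Finset.sum_eq_zero fun γ hγ => by rw [honly γ hγ, zero_mul], add_zero] at hs
    exact mul_ne_zero hc₁ (ψ.val_isUnit _).ne_zero hs
  push Not at honly
  obtain ⟨γ₂, hγ₂, hc₂⟩ := honly
  obtain ⟨u, hu⟩ := AddChar.ne_one_iff.mp hψ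
  have hγ : γ₂ - γ₁ ≠ 0 := sub_ne_zero.mpr (Finset.ne_of_mem_erase hγ₂)
  set s₀ := (γ₂ - γ₁)⁻¹ * u
  have hψ₀ : ψ (γ₂ * s₀) ≠ ψ (γ₁ * s₀) := by
    have : γ₂ * s₀ = u + γ₁ * s₀ := by
      simp only [s₀]
      field_simp
      ring
    rw [this, AddChar.map_add_eq_mul, Ne, mul_eq_right₀ (ψ.val_isUnit _).ne_zero]
    exact hu
  -- Artin's trick: comparing the relation at `s` and at `s + s₀` kills the `γ₁`-term
  -- but not the `γ₂`-term.
  set c' : k → K := fun γ => c γ * (ψ (γ * s₀) - ψ (γ₁ * s₀))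
  refine ih (S.erase γ₁) (Finset.erase_ssubset hγ₁) (c := c')
    ⟨γ₂, hγ₂, mul_ne_zero hc₂ (sub_ne_zero.mpr hψ₀)⟩ ?_
  have hshift := ((add_left_injective s₀).tendsto_cofinite).eventually hvanish
  filter_upwards [hvanish, hshift] with s h h'
  have hc'₁ : c' γ₁ * ψ (γ₁ * s) = 0 := by simp [c']
  rw [Finset.sum_erase S hc'₁]
  calc ∑ γ ∈ S, c' γ * ψ (γ * s)
      = ∑ γ ∈ S, c γ * ψ (γ * (s + s₀)) - ψ (γ₁ * s₀) * ∑ γ ∈ S, c γ * ψ (γ * s) := by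
        rw [Finset.mul_sum, ← Finset.sum_sub_distrib]
        refine Finset.sum_congr rfl fun γ _ => ?_
        rw [mul_add, AddChar.map_add_eq_mul]
        ring
    _ = 0 := by rw [h, h', mul_zero, sub_zero]

end Characters

section GroupAlgebra

open AddMonoidAlgebra

lemma AddMonoidAlgebra.coeff_single_one_mul_eq_mapDomain {R M : Type} [Semiring R] [AddMonoid M]
    (γ : M) (f : AddMonoidAlgebra R M) :
    (AddMonoidAlgebra.single γ (1 : R) * f).coeff = f.coeff.mapDomain (γ + ·) := by
  induction f using AddMonoidAlgebra.induction_linear with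
  | zero => simp
  | add f g hf hg => rw [mul_add, AddMonoidAlgebra.coeff_add, hf, hg, AddMonoidAlgebra.coeff_add,
      Finsupp.mapDomain_add]
  | single a b => simp [AddMonoidAlgebra.single_mul_single]

lemma AddMonoidAlgebra.mul_mem_of_forall_single_one_mul_mem {R M : Type} [CommSemiring R]
    [AddMonoid M] {N : Submodule R (AddMonoidAlgebra R M)}
    (hN : ∀ γ, ∀ f ∈ N, AddMonoidAlgebra.single γ 1 * f ∈ N) (r : AddMonoidAlgebra R M)
    {f : AddMonoidAlgebra R M} (hf : f ∈ N) : r * f ∈ N := by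
  induction r using AddMonoidAlgebra.induction_linear with
  | zero => simp
  | add r r' hr hr' => rw [add_mul]; exact N.add_mem hr hr'
  | single γ a =>
    rw [show AddMonoidAlgebra.single γ a = a • AddMonoidAlgebra.single γ 1 by
      rw [AddMonoidAlgebra.smul_single, smul_eq_mul, mul_one], smul_mul_assoc]
    exact N.smul_mem a (hN γ f hf)

variable {k F : Type} [Field k] [Field F]

theorem AddMonoidAlgebra.span_dilations_eq_top [Infinite k] {y : k →₀ F}
    (hy : augmentation k F y ≠ 0) :
    Ideal.span {f : F[k] | ∃ s ≠ (0 : k), ofCoeff (y.mapDomain (s * ·)) = f} = ⊤ := by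
  by_contra hne
  obtain ⟨m, hm, hle⟩ := Ideal.exists_le_maximal _ hne
  have := hm.isPrime
  let φ := Ideal.Quotient.mkₐ F m
  let ψ : AddChar k (F[k] ⧸ m) := AddChar.toMonoidHomEquiv.symm ((lift F _ k).symm φ)
  have hrel : ∀ s ≠ (0 : k), ∑ γ ∈ y.support, algebraMap F _ (y γ) * ψ (γ * s) = 0 := by
    intro s hs
    have h0 : φ (ofCoeff (y.mapDomain (s * ·))) = 0 :=
      Ideal.Quotient.eq_zero_iff_mem.mpr (hle (Ideal.subset_span ⟨s, hs, rfl⟩))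
    rw [lift_unique φ, coeff_ofCoeff, Finsupp.sum_mapDomain_index (by simp) (by simp [add_smul])]
      at h0
    simpa [Finsupp.sum, Algebra.smul_def, ψ, mul_comm s] using h0
  have hinj : Function.Injective (algebraMap F (F[k] ⧸ m)) := (algebraMap F _).injective
  by_cases hψ : ψ = 1
  · apply hy
    apply hinj
    simpa [hψ, augmentation, Finsupp.linearCombination_apply, Finsupp.sum] using hrel 1 one_ne_zero
  · refine ψ.not_eventually_sum_mul_eq_zero hψ y.support
      (c := fun γ => algebraMap F _ (y γ)) ?_ ?_
    · have hy0 : y ≠ 0 := by rintro rfl; exact hy (map_zero _)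
      obtain ⟨γ, hγ⟩ := Finsupp.support_nonempty_iff.mpr hy0
      exact ⟨γ, hγ, (map_ne_zero_iff _ hinj).mpr (Finsupp.mem_support_iff.mp hγ)⟩
    · filter_upwards [Filter.eventually_cofinite_ne 0] with s hs using hrel s hs

end GroupAlgebra

section Steinberg

open AddMonoidAlgebra ProjLine

lemma ker_augmentation_le {X F : Type} [Field F] {V : Submodule F (X →₀ F)} (q : X)
    (h : ∀ p, Finsupp.single p 1 - Finsupp.single q 1 ∈ V) :
    LinearMap.ker (augmentation X F) ≤ V := by
  have key : ∀ x : X →₀ F, x - augmentation X F x • Finsupp.single q 1 ∈ V := by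
    intro x
    induction x using Finsupp.induction_linear with
    | zero => simp
    | add x y hx hy =>
      convert V.add_mem hx hy using 1
      rw [map_add, add_smul]
      abel
    | single p a =>
      convert V.smul_mem a (h p) using 1
      simp [augmentation, smul_sub]
  intro x hx
  simpa [LinearMap.mem_ker.mp hx] using key x

variable {k F : Type} [Field k] [Field F]

noncomputable def affineSteinbergMap : (k →₀ F) →ₗ[F] (ProjLine k →₀ F) :=
  Finsupp.linearCombination F fun t => Finsupp.single (affinePoint t) 1 - Finsupp.single infty 1

lemma affineSteinbergMap_apply_infty (y : k →₀ F) :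
    affineSteinbergMap y infty = -augmentation k F y := by
  change (Finsupp.lapply _ ∘ₗ affineSteinbergMap) y = (-augmentation k F) y
  congr 1
  ext t
  simp [affineSteinbergMap, augmentation, Finsupp.single_eq_of_ne' (affinePoint_ne_infty t)]

lemma affineSteinbergMap_mapDomain {g : GL (Fin 2) k} {f : k → k}
    (hf : ∀ t, glPoint g (affinePoint t) = affinePoint (f t)) (hg : glPoint g infty = infty)
    (y : k →₀ F) :
    affineSteinbergMap (y.mapDomain f) = (affineSteinbergMap y).mapDomain (glPoint g) := by
  change (affineSteinbergMap ∘ₗ Finsupp.lmapDomain F F f) y =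
    (Finsupp.lmapDomain F F (glPoint g) ∘ₗ affineSteinbergMap) y
  congr 1
  ext t
  simp [affineSteinbergMap, Finsupp.mapDomain_sub, hf, hg]

lemma steinbergGL2_le_range_affineSteinbergMap :
    SteinbergGL2 k F ≤ LinearMap.range (affineSteinbergMap (k := k) (F := F)) := by
  refine ker_augmentation_le infty fun p => ?_
  rcases eq_infty_or_exists_eq_affinePoint p with rfl | ⟨t, rfl⟩
  · simp
  · exact ⟨Finsupp.single t 1, by simp [affineSteinbergMap]⟩

lemma steinbergGL2_ne_bot : SteinbergGL2 k F ≠ ⊥ := by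
  refine (Submodule.ne_bot_iff _).mpr
    ⟨Finsupp.single (affinePoint (0 : k)) 1 - Finsupp.single infty 1, ?_, ?_⟩
  · simp [SteinbergGL2, augmentation]
  · exact sub_ne_zero.mpr ((Finsupp.single_left_injective one_ne_zero).ne (affinePoint_ne_infty 0))

variable {V : Submodule F (ProjLine k →₀ F)}

lemma exists_augmentation_ne_zero_mem
    (hV : ∀ (g : GL (Fin 2) k), ∀ x ∈ V, Finsupp.mapDomain (glPoint g) x ∈ V)
    (hVle : V ≤ SteinbergGL2 k F) (hVne : V ≠ ⊥) :
    ∃ y : k →₀ F, augmentation k F y ≠ 0 ∧ affineSteinbergMap y ∈ V := by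
  obtain ⟨z, hzV, hz⟩ := Submodule.exists_mem_ne_zero_of_ne_bot hVne
  obtain ⟨p, hp⟩ := Finsupp.support_nonempty_iff.mpr hz
  obtain ⟨g, hg⟩ := exists_glPoint_eq p infty
  obtain ⟨y, hy⟩ := steinbergGL2_le_range_affineSteinbergMap (hVle (hV g z hzV))
  refine ⟨y, fun h0 => Finsupp.mem_support_iff.mp hp ?_, hy ▸ hV g z hzV⟩
  rw [← Finsupp.mapDomain_apply (glPoint_injective g), hg, ← hy, affineSteinbergMap_apply_infty,
    h0, neg_zero]

lemma single_zero_sub_single_infty_mem [Infinite k]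
    (hV : ∀ (g : GL (Fin 2) k), ∀ x ∈ V, Finsupp.mapDomain (glPoint g) x ∈ V)
    {y : k →₀ F} (hy : augmentation k F y ≠ 0) (hyV : affineSteinbergMap y ∈ V) :
    Finsupp.single (affinePoint (0 : k)) 1 - Finsupp.single infty 1 ∈ V := by
  let N : Submodule F F[k] := V.comap (affineSteinbergMap ∘ₗ (coeffLinearEquiv F).toLinearMap)
  have hmem (f : F[k]) : f ∈ N ↔ affineSteinbergMap f.coeff ∈ V := Iff.rfl
  have hN : ∀ γ, ∀ f ∈ N, single γ 1 * f ∈ N := fun γ f hf => by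
    rw [hmem] at hf ⊢
    rw [coeff_single_one_mul_eq_mapDomain,
      affineSteinbergMap_mapDomain (g := affineGL 1 γ one_ne_zero)
      (fun t => by rw [glPoint_affineGL_affinePoint, one_mul, add_comm])
      (glPoint_affineGL_infty ..)]
    exact hV _ _ hf
  let I : Ideal F[k] :=
    { N with smul_mem' := fun r _ hf => mul_mem_of_forall_single_one_mul_mem hN r hf }
  have hdil : Ideal.span {f : F[k] | ∃ s ≠ (0 : k), ofCoeff (y.mapDomain (s * ·)) = f} ≤ I := by
    refine Ideal.span_le.mpr ?_
    rintro _ ⟨s, hs, rfl⟩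
    refine (hmem _).mpr ?_
    rw [coeff_ofCoeff, affineSteinbergMap_mapDomain (g := affineGL s 0 hs)
      (fun t => by rw [glPoint_affineGL_affinePoint, add_zero]) (glPoint_affineGL_infty ..)]
    exact hV _ _ hyV
  have h1 := (hmem 1).mp (hdil (span_dilations_eq_top hy ▸ Submodule.mem_top))
  simpa [affineSteinbergMap, one_def] using h1

lemma steinbergGL2_le_of_single_sub_mem
    (hV : ∀ (g : GL (Fin 2) k), ∀ x ∈ V, Finsupp.mapDomain (glPoint g) x ∈ V)
    (h : Finsupp.single (affinePoint (0 : k)) 1 - Finsupp.single infty 1 ∈ V) :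
    SteinbergGL2 k F ≤ V := by
  refine ker_augmentation_le infty fun p => ?_
  by_cases hp : p = infty
  · simp [hp]
  obtain ⟨g, h0, hinf⟩ := exists_glPoint_eq_pair (affinePoint_ne_infty 0) hp
  simpa [Finsupp.mapDomain_sub, h0, hinf] using hV g _ h

end Steinberg

/-- The Steinberg representation `St(GL₂; F)` of `GL₂(k)` is irreducible when `k` is an
infinite field: it is nonzero, and any `GL₂(k)`-stable `F`-subspace of it is `0` or
everything. -/
theorem stmt5 (k F : Type) [Field k] [Infinite k] [Field F] :
    SteinbergGL2 k F ≠ ⊥ ∧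
    ∀ V : Submodule F (ProjLine k →₀ F), V ≤ SteinbergGL2 k F →
      (∀ (g : GL (Fin 2) k), ∀ x ∈ V, Finsupp.mapDomain (glPoint g) x ∈ V) →
      V = ⊥ ∨ V = SteinbergGL2 k F := by
  refine ⟨steinbergGL2_ne_bot, fun V hVle hV => or_iff_not_imp_left.mpr fun hVne => ?_⟩
  obtain ⟨y, hy, hyV⟩ := exists_augmentation_ne_zero_mem hV hVle hVne
  exact le_antisymm hVle
    (steinbergGL2_le_of_single_sub_mem hV (single_zero_sub_single_infty_mem hV hy hyV))
end

section
/- Let $k$ be an infinite field and let $\mathbb{F}$ be a field. Let $\mathbb{F}[k]$ denote the group algebra over $\mathbb{F}$ of the additive group $(k,+)$. For $t \in k^{\times}$, let $\sigma_t$ be the $\mathbb{F}$-algebra automorphism of $\mathbb{F}[k]$ induced by the group automorphism $\lambda \mapsto t\lambda$ of $(k,+)$. Let $I \subseteq \mathbb{F}[k]$ be an ideal such that $\sigma_t(I) \subseteq I$ for all $t \in k^{\times}$ and such that $I$ is not contained in the augmentation ideal. Then $I = \mathbb{F}[k]$. -/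
/-!
If `I` is proper, pick a maximal ideal `m ⊇ I` and `x ∈ I` of nonzero augmentation,
and let `χ(a)` be the image of `[a]` in the field `K = F[k] ⧸ m`. Then
`f(t) = Σ_λ x_λ χ(tλ)`, the image of `σ_t x`, lies in the span of the finitely many additive
characters `t ↦ χ(tλ)`, vanishes for `t ≠ 0`, and `f(0)` is the augmentation of `x`.
That span is a finite-dimensional, translation-invariant space of functions `k → K`; if it
contained a nonzero multiple of the indicator of `0`, it would contain the indicators of all
points of the infinite group `k`, which are linearly independent.
-/

open Submodule Set

namespace AddChar

variable {G K : Type*} [AddGroup G] [Field K]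

lemma translate_mem_span_range {ι : Type*} (ψ : ι → AddChar G K) (s : G) {f : G → K}
    (hf : f ∈ span K (range fun i => ⇑(ψ i))) :
    (fun t => f (t + s)) ∈ span K (range fun i => ⇑(ψ i)) := by
  have hmap : map (LinearMap.funLeft K K (· + s)) (span K (range fun i => ⇑(ψ i)))
      ≤ span K (range fun i => ⇑(ψ i)) := by
    refine (map_span_le _ _ _).2 ?_
    rintro _ ⟨i, rfl⟩
    have htrans : LinearMap.funLeft K K (· + s) (ψ i) = ψ i s • ⇑(ψ i) := by
      ext t
      simp [LinearMap.funLeft_apply, map_add_eq_mul, mul_comm]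
    rw [htrans]
    exact smul_mem _ _ (subset_span ⟨i, rfl⟩)
  exact hmap (mem_map_of_mem hf)

theorem apply_eq_zero_of_mem_span_range [Infinite G] {ι : Type*} [Finite ι]
    (ψ : ι → AddChar G K) {f : G → K} (hf : f ∈ span K (range fun i => ⇑(ψ i))) {g : G}
    (hg : ∀ t ≠ g, f t = 0) : f g = 0 := by
  classical
  by_contra hfg
  have hsingle : ∀ s : G, Pi.single s 1 ∈ span K (range fun i => ⇑(ψ i)) := by
    intro s
    have : Pi.single s (1 : K) = (f g)⁻¹ • fun t => f (t + (-s + g)) := by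
      ext t
      by_cases hts : t = s
      · subst hts; simp [hfg]
      · have : t + (-s + g) ≠ g := by
          rwa [ne_eq, ← add_assoc, add_eq_right, add_neg_eq_zero]
        simp [hts, hg _ this]
    rw [this]
    exact smul_mem _ _ (translate_mem_span_range ψ _ hf)
  have : Finite G := (Pi.linearIndependent_single_one G K).finite_of_le_span_finite _ _
    (range_subset_iff.2 hsingle)
  exact not_finite G

end AddChar

namespace AddMonoidAlgebra

lemma linearMap_mapDomain {R M G H : Type*} [Semiring R] [AddCommMonoid M] [Module R M]
    (φ : AddMonoidAlgebra R H →ₗ[R] M) (g : G → H) (x : AddMonoidAlgebra R G) :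
    φ (mapDomain g x) = x.coeff.sum fun l c => c • φ (single (g l) 1) := by
  simp only [mapDomain, Finsupp.mapDomain, ofCoeff_finsuppSum, map_finsuppSum]
  refine Finsupp.sum_congr fun l _ => ?_
  rw [← map_smul, smul_single', mul_one, ofCoeff_single]

end AddMonoidAlgebra

open AddMonoidAlgebra in
theorem stmt6 (k : Type) [Field k] [Infinite k] (F : Type) [Field F]
    (I : Ideal (AddMonoidAlgebra F k))
    (hstab : ∀ t : kˣ, ∀ x ∈ I,
      (AddMonoidAlgebra.ofCoeff (Finsupp.mapDomain (fun lam : k => (t : k) * lam) x.coeff) : AddMonoidAlgebra F k) ∈ I)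
    (hne : ∃ x ∈ I, (Finsupp.sum x.coeff fun _ c => c) ≠ 0) :
    I = ⊤ := by
  by_contra hI
  obtain ⟨m, hm, hIm⟩ := Ideal.exists_le_maximal I hI
  let _ := Ideal.Quotient.field m
  obtain ⟨x, hxI, hεx⟩ := hne
  let π := Ideal.Quotient.mkₐ F m
  let χ : AddChar k (AddMonoidAlgebra F k ⧸ m) :=
    AddChar.toMonoidHomEquiv.symm ((π : AddMonoidAlgebra F k →* _).comp (of F k))
  let ψ : k → AddChar k (AddMonoidAlgebra F k ⧸ m) :=
    fun l => χ.compAddMonoidHom (AddMonoidHom.mulRight l)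
  let f : k → AddMonoidAlgebra F k ⧸ m := fun t => π (mapDomain (t * ·) x)
  have hf : f = ∑ l ∈ x.coeff.support, x.coeff l • ⇑(ψ l) := by
    ext t
    rw [Finset.sum_apply]
    exact linearMap_mapDomain π.toLinearMap _ x
  have hspan :
      f ∈ span (AddMonoidAlgebra F k ⧸ m) (range fun l : x.coeff.support => ⇑(ψ l)) := by
    rw [hf]
    exact sum_mem fun l hl => smul_of_tower_mem _ _ (subset_span ⟨⟨l, hl⟩, rfl⟩)
  have hvanish : ∀ t ≠ 0, f t = 0 := fun t ht =>
    Ideal.Quotient.eq_zero_iff_mem.2 (hIm (hstab (Units.mk0 t ht) x hxI))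
  have hf0 : f 0 = algebraMap F _ (x.coeff.sum fun _ c => c) := by
    simp [hf, Finsupp.sum, Algebra.algebraMap_eq_smul_one]
  have hf0_eq_zero : f 0 = 0 :=
    AddChar.apply_eq_zero_of_mem_span_range (fun l : x.coeff.support => ψ l) hspan hvanish
  exact hεx ((algebraMap F _).injective (by rw [← hf0, hf0_eq_zero, map_zero]))
end

section
/- Let $p$ be a prime, let $\Gamma$ be a group all of whose finitely generated subgroups are finite $p$-groups, and let $\mathbb{F}$ be a field of characteristic $p$. Let $I$ be a left ideal of the group algebra $\mathbb{F}[\Gamma]$ that is not contained in the augmentation ideal. Then $I = \mathbb{F}[\Gamma]$. -/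
/-!
An element `x` of `F[Γ]` lies in `F[H]` for the finite `p`-group `H` generated by its support, so
it suffices to find a left inverse of `x` in `F[H]`. If there were none, `F[H] x` would lie in a
maximal left ideal `m`. A finite `p`-group acting on a nonzero module of exponent `p` fixes a
nonzero vector `b`; as `F[H] ⧸ m` is simple, `b` generates it, so `F[H]` acts on it through the
augmentation `ε`. Then `x` acts as the unit `ε x`, contradicting `x • 1 = 0` in `F[H] ⧸ m`.
-/

open MonoidAlgebra

/-- The `𝔽_p`-span of an orbit is a finite `G`-stable set containing an element of order `p`,
so counting fixed points modulo `p` produces a fixed point besides `0`. -/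
theorem IsPGroup.exists_ne_zero_forall_smul_eq_self {p : ℕ} [Fact p.Prime] {G M : Type*}
    [Group G] [Finite G] (hG : IsPGroup p G) [AddCommGroup M] [DistribMulAction G M]
    [Nontrivial M] (hM : ∀ m : M, p • m = 0) : ∃ b : M, b ≠ 0 ∧ ∀ g : G, g • b = b := by
  have : Module (ZMod p) M := AddCommGroup.zmodModule hM
  obtain ⟨m, hm⟩ := exists_ne (0 : M)
  let V : Submodule (ZMod p) M := .span (ZMod p) (Set.range fun g : G => g • m)
  have hV (g : G) (v : M) : v ∈ V → g • v ∈ V := by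
    let f : M →ₗ[ZMod p] M := (DistribSMul.toAddMonoidHom M g).toZModLinearMap p
    have : V.map f ≤ V := (Submodule.map_span_le _ _ V).mpr <| by
      rintro _ ⟨h, rfl⟩
      exact Submodule.subset_span ⟨g * h, mul_smul g h m⟩
    exact fun hv => this ⟨v, hv, rfl⟩
  let W : SubMulAction G M := ⟨V, fun g {v} => hV g v⟩
  have : Module.Finite (ZMod p) V := .span_of_finite _ (Set.finite_range _)
  have : Finite V := Module.finite_of_finite (ZMod p)
  have : Finite W := this
  have hdvd : p ∣ Nat.card W := by
    have := V.toAddSubgroup.addOrderOf_dvd_natCard (Submodule.subset_span ⟨1, one_smul G m⟩)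
    rwa [addOrderOf_eq_prime (hM m) hm] at this
  obtain ⟨b, hb, hb0⟩ := hG.exists_fixed_point_of_prime_dvd_card_of_fixed_point W hdvd
    (a := ⟨0, V.zero_mem⟩) fun g => Subtype.ext (smul_zero g)
  exact ⟨b, fun h => hb0 (Subtype.ext h.symm), fun g => congrArg Subtype.val (hb g)⟩

namespace MonoidAlgebra

noncomputable def augmentation (F G : Type*) [CommSemiring F] [Monoid G] :
    MonoidAlgebra F G →ₐ[F] F :=
  lift F F G 1

variable {F G : Type*}

section CommSemiring

variable [CommSemiring F]

lemma augmentation_apply [Monoid G] (x : MonoidAlgebra F G) :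
    augmentation F G x = x.coeff.sum fun _ c => c := by
  simp [augmentation, lift_apply]

lemma augmentation_mapDomain {H : Type*} [Monoid G] [Monoid H] (f : G → H)
    (x : MonoidAlgebra F G) : augmentation F H (mapDomain f x) = augmentation F G x := by
  simp only [augmentation_apply, mapDomain]
  exact Finsupp.sum_mapDomain_index (fun _ => rfl) fun _ _ _ => rfl

variable [Monoid G] {M : Type*} [AddCommMonoid M] [Module (MonoidAlgebra F G) M] {b : M}

lemma smul_eq_algebraMap_augmentation_smul (hb : ∀ g, of F G g • b = b)
    (z : MonoidAlgebra F G) :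
    z • b = algebraMap F (MonoidAlgebra F G) (augmentation F G z) • b := by
  induction z using MonoidAlgebra.induction_on with
  | of g => rw [hb, augmentation, lift_of, MonoidHom.one_apply, map_one, one_smul]
  | add x y hx hy => rw [add_smul, hx, hy, map_add, map_add, add_smul]
  | smul r x hx => rw [map_smul, smul_eq_mul, map_mul, Algebra.smul_def, mul_smul, hx, mul_smul]

lemma smul_eq_algebraMap_augmentation_smul_of_mem_span (hb : ∀ g, of F G g • b = b)
    (z : MonoidAlgebra F G) {v : M} (hv : v ∈ Submodule.span (MonoidAlgebra F G) {b}) :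
    z • v = algebraMap F (MonoidAlgebra F G) (augmentation F G z) • v := by
  obtain ⟨y, rfl⟩ := Submodule.mem_span_singleton.mp hv
  have hfix := smul_eq_algebraMap_augmentation_smul hb
  rw [smul_smul, hfix (z * y), hfix y, map_mul, map_mul, mul_smul]

end CommSemiring

variable [Group G] [Finite G] {p : ℕ} [Fact p.Prime]

lemma exists_ne_zero_forall_of_smul_eq_self (hG : IsPGroup p G) [CommRing F] [CharP F p]
    (M : Type*) [AddCommGroup M] [Module (MonoidAlgebra F G) M] [Nontrivial M] :
    ∃ b : M, b ≠ 0 ∧ ∀ g, of F G g • b = b := by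
  let _ := DistribMulAction.compHom M (of F G)
  refine hG.exists_ne_zero_forall_smul_eq_self fun m => ?_
  rw [← Nat.cast_smul_eq_nsmul (MonoidAlgebra F G),
    ← map_natCast (algebraMap F (MonoidAlgebra F G)), CharP.cast_eq_zero, map_zero, zero_smul]

theorem exists_mul_eq_one_of_isUnit_augmentation (hG : IsPGroup p G) [CommRing F] [CharP F p]
    {x : MonoidAlgebra F G} (hx : IsUnit (augmentation F G x)) : ∃ u, u * x = 1 := by
  by_contra! hx_left
  have hspan : Ideal.span {x} ≠ ⊤ := fun h =>
    have ⟨u, hu⟩ := Ideal.mem_span_singleton'.mp (h ▸ Submodule.mem_top :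
      (1 : MonoidAlgebra F G) ∈ Ideal.span {x})
    hx_left u hu
  obtain ⟨m, hm, hxm⟩ := Ideal.exists_le_maximal _ hspan
  have : IsSimpleModule (MonoidAlgebra F G) (MonoidAlgebra F G ⧸ m) :=
    isSimpleModule_iff_isCoatom.mpr hm.out
  have := IsSimpleModule.nontrivial (MonoidAlgebra F G) (MonoidAlgebra F G ⧸ m)
  obtain ⟨b, hb0, hb⟩ := exists_ne_zero_forall_of_smul_eq_self (F := F) hG (MonoidAlgebra F G ⧸ m)
  have key := smul_eq_algebraMap_augmentation_smul_of_mem_span hb x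
    (v := Submodule.Quotient.mk 1) (by rw [IsSimpleModule.span_singleton_eq_top _ hb0]; trivial)
  rw [← Submodule.Quotient.mk_smul, ← Submodule.Quotient.mk_smul, smul_eq_mul, smul_eq_mul,
    mul_one, mul_one, (Submodule.Quotient.mk_eq_zero m).mpr (hxm (Ideal.mem_span_singleton_self x)),
    eq_comm, Submodule.Quotient.mk_eq_zero] at key
  exact hm.ne_top (Ideal.eq_top_of_isUnit_mem m key (hx.map _))

end MonoidAlgebra

theorem stmt9 (p : ℕ) (hp : p.Prime) (Γ : Type) [Group Γ]
    (hΓ : ∀ S : Finset Γ, Finite (Subgroup.closure (S : Set Γ)) ∧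
      IsPGroup p (Subgroup.closure (S : Set Γ)))
    (F : Type) [Field F] [CharP F p]
    (I : Ideal (MonoidAlgebra F Γ))
    (hne : ∃ x ∈ I, (Finsupp.sum x.coeff fun _ c => c) ≠ 0) :
    I = ⊤ := by
  obtain ⟨x, hxI, hx⟩ := hne
  let H := Subgroup.closure (x.coeff.support : Set Γ)
  obtain ⟨_, hH⟩ := hΓ x.coeff.support
  have : Fact p.Prime := ⟨hp⟩
  let x' := comapDomain H.subtype Subtype.val_injective x
  have hx' : mapDomain H.subtype x' = x := mapDomain_comapDomain
    (by rw [H.coe_subtype, Subtype.range_coe]; exact Subgroup.subset_closure) _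
  obtain ⟨u, hu⟩ := exists_mul_eq_one_of_isUnit_augmentation hH (x := x') <| by
    rw [← augmentation_mapDomain H.subtype, hx', augmentation_apply]
    exact hx.isUnit
  have hux : mapDomain H.subtype u * x = 1 := by
    rw [← hx', ← mapDomain_mul, hu, mapDomain_one]
  exact (Ideal.eq_top_iff_one I).mpr (hux ▸ I.mul_mem_left _ hxI)
end

section
/- Let $k$ be an infinite field of positive characteristic $p$. Let $f_1,\ldots,f_r \colon k \to \mathbb{F}_p$ be A-polynomials on $k$ such that $f_i(0) = 0$ for $1 \leq i \leq r$, and let $\mathfrak{a}$ be an infinite additive subgroup of $k$. Then there exists a nonzero $a \in \mathfrak{a}$ such that $f_i(a) = 0$ for all $1 \leq i \leq r$. -/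
/-!
Choose `N > ∑ deg φᵢ` elements of `𝔞` that are linearly independent over `𝔽_p`; this is possible
because an infinite `𝔽_p`-vector space has infinite dimension. On their `𝔽_p`-span, each
`fᵢ = λᵢ ∘ φᵢ` becomes a polynomial function of the `N` coordinates of degree at most `deg φᵢ`,
since `λᵢ` is `𝔽_p`-linear. These polynomials vanish at the origin, and their degrees sum to less
than the number of variables, so by Chevalley–Warning they have a common nontrivial zero.
-/

open MvPolynomial

section

variable {K A σ : Type*} [CommSemiring K] [CommSemiring A] [Algebra K A]

theorem MvPolynomial.exists_totalDegree_le_eval_eq_linearMap (ℓ : A →ₗ[K] K)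
    (Q : MvPolynomial σ A) :
    ∃ P : MvPolynomial σ K, P.totalDegree ≤ Q.totalDegree ∧
      ∀ x : σ → K, eval x P = ℓ (eval (algebraMap K A ∘ x) Q) := by
  refine ⟨∑ s ∈ Q.support, monomial s (ℓ (Q.coeff s)), ?_, fun x => ?_⟩
  · refine (totalDegree_finsetSum _ _).trans (Finset.sup_le fun s hs => ?_)
    exact (totalDegree_monomial_le _ _).trans (le_totalDegree hs)
  · rw [eval_eq (algebraMap K A ∘ x) Q]
    simp only [map_sum, eval_monomial, Function.comp_apply, ← map_pow, ← map_prod]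
    refine Finset.sum_congr rfl fun s _ => ?_
    rw [mul_comm (Q.coeff s), ← Algebra.smul_def, map_smul, smul_eq_mul, mul_comm, Finsupp.prod]

theorem MvPolynomial.exists_totalDegree_le_one_eval_eq_linearMap [Fintype σ]
    (g : (σ → K) →ₗ[K] A) :
    ∃ L : MvPolynomial σ A, L.totalDegree ≤ 1 ∧
      ∀ x : σ → K, eval (algebraMap K A ∘ x) L = g x := by
  classical
  refine ⟨∑ j, monomial (Finsupp.single j 1) (g (Pi.single j 1)), ?_, fun x => ?_⟩
  · refine (totalDegree_finsetSum _ _).trans (Finset.sup_le fun j _ => ?_)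
    exact (totalDegree_monomial_le _ _).trans (by simp)
  · simp only [map_sum, eval_monomial, Finsupp.prod_single_index, pow_zero, pow_one,
      Function.comp_apply]
    conv_rhs => rw [pi_eq_sum_univ' x, map_sum]
    refine Finset.sum_congr rfl fun j _ => ?_
    rw [map_smul, Algebra.smul_def, mul_comm]

theorem MvPolynomial.totalDegree_aeval_le (φ : Polynomial A) (L : MvPolynomial σ A) :
    (Polynomial.aeval L φ).totalDegree ≤ φ.natDegree * L.totalDegree := by
  rw [Polynomial.aeval_eq_sum_range]
  refine (totalDegree_finsetSum _ _).trans (Finset.sup_le fun i hi => ?_)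
  calc (φ.coeff i • L ^ i).totalDegree ≤ (L ^ i).totalDegree := totalDegree_smul_le _ _
    _ ≤ i * L.totalDegree := totalDegree_pow _ _
    _ ≤ φ.natDegree * L.totalDegree := by
      gcongr; exact Nat.lt_succ_iff.mp (Finset.mem_range.mp hi)

theorem MvPolynomial.eval_polynomial_aeval (φ : Polynomial A) (L : MvPolynomial σ A)
    (y : σ → A) : eval y (Polynomial.aeval L φ) = φ.eval (eval y L) := by
  simpa using (Polynomial.aeval_algHom_apply (MvPolynomial.aeval y) L φ).symm

theorem MvPolynomial.exists_totalDegree_le_natDegree_eval_eq [Fintype σ]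
    (g : (σ → K) →ₗ[K] A) (ℓ : A →ₗ[K] K) (φ : Polynomial A) :
    ∃ P : MvPolynomial σ K, P.totalDegree ≤ φ.natDegree ∧
      ∀ x : σ → K, eval x P = ℓ (φ.eval (g x)) := by
  obtain ⟨L, hLdeg, hL⟩ := exists_totalDegree_le_one_eval_eq_linearMap g
  obtain ⟨P, hPdeg, hP⟩ := exists_totalDegree_le_eval_eq_linearMap ℓ (Polynomial.aeval L φ)
  refine ⟨P, hPdeg.trans ((totalDegree_aeval_le φ L).trans ?_), fun x => ?_⟩
  · simpa using Nat.mul_le_mul_left φ.natDegree hLdeg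
  · rw [hP, eval_polynomial_aeval, hL]

end

theorem Module.exists_injective_linearMap_of_infinite {K M : Type*} [DivisionRing K] [Finite K]
    [AddCommGroup M] [Module K M] [Infinite M] (n : ℕ) :
    ∃ f : (Fin n → K) →ₗ[K] M, Function.Injective f := by
  refine Module.le_rank_iff_exists_linearMap.mp ?_
  have : ¬ Module.Finite K M := Module.finite_iff_finite.not.mpr (not_finite_iff_infinite.mpr ‹_›)
  exact Cardinal.natCast_lt_aleph0.le.trans (not_lt.mp (this ∘ Module.rank_lt_aleph0_iff.mp))

theorem MvPolynomial.exists_ne_zero_forall_eval_eq_zero {K σ ι : Type*} [Field K] [Fintype K]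
    [Fintype σ] [Fintype ι] {f : ι → MvPolynomial σ K}
    (hdeg : ∑ i, (f i).totalDegree < Fintype.card σ) (h0 : ∀ i, eval 0 (f i) = 0) :
    ∃ x ≠ 0, ∀ i, eval x (f i) = 0 := by
  classical
  let zero : { x : σ → K // ∀ i, eval x (f i) = 0 } := ⟨0, h0⟩
  have hdvd := char_dvd_card_solutions_of_fintype_sum_lt (ringChar K) hdeg
  have hpos : 0 < Fintype.card { x : σ → K // ∀ i, eval x (f i) = 0 } :=
    Fintype.card_pos_iff.mpr ⟨zero⟩
  have hcard : 1 < Fintype.card { x : σ → K // ∀ i, eval x (f i) = 0 } :=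
    (CharP.char_is_prime K (ringChar K)).one_lt.trans_le (Nat.le_of_dvd hpos hdvd)
  obtain ⟨x, hx⟩ := Fintype.exists_ne_of_one_lt_card hcard zero
  exact ⟨x, fun h => hx (Subtype.ext h), x.2⟩

theorem stmt12_general (k : Type) [Field k] (p : ℕ) (hp : p.Prime) [CharP k p]
    (r : ℕ) (φ : Fin r → Polynomial k) (lam : Fin r → (k →+ ZMod p))
    (h0 : ∀ i, lam i ((φ i).eval 0) = 0)
    (𝔞 : AddSubgroup k) (h𝔞 : (𝔞 : Set k).Infinite) :
    ∃ a ∈ 𝔞, a ≠ 0 ∧ ∀ i, lam i ((φ i).eval a) = 0 := by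
  have := Fact.mk hp
  let := ZMod.algebra k p
  set S := AddSubgroup.toZModSubmodule p 𝔞
  have : Infinite S := h𝔞.to_subtype
  obtain ⟨g, hg⟩ :=
    Module.exists_injective_linearMap_of_infinite (K := ZMod p) (M := S) (∑ i, (φ i).natDegree + 1)
  choose P hPdeg hPeval using fun i =>
    exists_totalDegree_le_natDegree_eval_eq (S.subtype ∘ₗ g) ((lam i).toZModLinearMap p) (φ i)
  have hdeg : ∑ i, (P i).totalDegree < Fintype.card (Fin (∑ i, (φ i).natDegree + 1)) := by
    simpa [Nat.lt_succ_iff] using Finset.sum_le_sum fun i _ => hPdeg i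
  obtain ⟨x, hx0, hx⟩ := exists_ne_zero_forall_eval_eq_zero hdeg fun i => by
    rw [hPeval, map_zero]; exact h0 i
  exact ⟨g x, (g x).2, by simpa using (map_ne_zero_iff g hg).mpr hx0,
    fun i => by simpa [hPeval] using hx i⟩

theorem stmt12 (k : Type) [Field k] [Infinite k] (p : ℕ) (hp : p.Prime) [CharP k p]
    (r : ℕ) (φ : Fin r → Polynomial k) (lam : Fin r → (k →+ ZMod p))
    (h0 : ∀ i, lam i ((φ i).eval 0) = 0)
    (𝔞 : AddSubgroup k) (h𝔞 : (𝔞 : Set k).Infinite) :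
    ∃ a ∈ 𝔞, a ≠ 0 ∧ ∀ i, lam i ((φ i).eval a) = 0 :=
  stmt12_general k p hp r φ lam h0 𝔞 h𝔞
end

section
/- Let $p$ be a prime and let $G$ be an abelian group of exponent $p$ (i.e., $g^p = 1$ for all $g \in G$). Let $M$ be an abelian group on which multiplication by $p$ is bijective (equivalently, a module over $\mathbb{Z}[1/p]$), equipped with an action of $G$ by additive automorphisms, and let $m \in M$ be nonzero. Then there exists a subgroup $H \subseteq G$ of index $1$ or $p$ such that the image of $m$ in the coinvariants $M_H$ is nonzero. -/
/-!
Take, by Zorn's lemma, a subgroup `K` maximal with `m ∉ I_K M`, where `I_K M` is the kernel of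
`M → M_K`. If `K` had index neither `1` nor `p`, there would be `g, g'` independent modulo `K`.
Maximality puts `m` into `I_L M` for every `L = K ⊔ ⟨h⟩` with `h ∉ K`, so the norm `N_h` of the
cyclic group `⟨h⟩` maps `m` into `I_K M`. Applying this to the `p + 1` lines `⟨g g'^b⟩` and `⟨g'⟩`
of the plane spanned by `g, g'`, the identity `∑_b N_{g g'^b} + N_{g'} = p + N_g N_{g'}` gives
`p • m ∈ I_K M`, hence `m ∈ I_K M` since `I_K M` is `p`-divisible: a contradiction.
-/

open Subgroup

section Coinvariants

variable {G : Type*} [CommGroup G] (M : Type*) [AddCommGroup M] [DistribMulAction G M]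

def coinvariantsKer (H : Subgroup G) : AddSubgroup M :=
  AddSubgroup.closure {y : M | ∃ (g : H) (x : M), y = (g : G) • x - x}

variable {M}

theorem smul_sub_mem_coinvariantsKer {H : Subgroup G} {g : G} (hg : g ∈ H) (x : M) :
    g • x - x ∈ coinvariantsKer M H :=
  AddSubgroup.subset_closure ⟨⟨g, hg⟩, x, rfl⟩

theorem coinvariantsKer_mono : Monotone (coinvariantsKer M : Subgroup G → AddSubgroup M) :=
  fun _ _ hHK => (AddSubgroup.closure_le _).2 <| by
    rintro _ ⟨g, x, rfl⟩
    exact smul_sub_mem_coinvariantsKer (hHK g.2) x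

theorem coinvariantsKer_bot : coinvariantsKer M (⊥ : Subgroup G) = ⊥ :=
  eq_bot_iff.2 <| (AddSubgroup.closure_le _).2 <| by
    rintro _ ⟨⟨g, hg⟩, x, rfl⟩
    obtain rfl := mem_bot.1 hg
    simp

theorem smul_mem_coinvariantsKer {H : Subgroup G} (g : G) {y : M}
    (hy : y ∈ coinvariantsKer M H) : g • y ∈ coinvariantsKer M H := by
  induction hy using AddSubgroup.closure_induction with
  | mem _ hy =>
    obtain ⟨h, x, rfl⟩ := hy
    rw [smul_sub, smul_comm]
    exact smul_sub_mem_coinvariantsKer h.2 _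
  | zero => simp
  | add _ _ _ _ ha hb => simpa using add_mem ha hb
  | neg _ _ ha => simpa using neg_mem ha

theorem exists_mem_of_mem_coinvariantsKer_sSup {c : Set (Subgroup G)} (hne : c.Nonempty)
    (hc : DirectedOn (· ≤ ·) c) {y : M} (hy : y ∈ coinvariantsKer M (sSup c)) :
    ∃ K ∈ c, y ∈ coinvariantsKer M K := by
  have hle : coinvariantsKer M (sSup c) ≤ sSup (coinvariantsKer M '' c) := by
    refine (AddSubgroup.closure_le _).2 ?_
    rintro _ ⟨⟨g, hg⟩, x, rfl⟩
    obtain ⟨K, hK, hgK⟩ := (mem_sSup_of_directedOn hne hc).1 hg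
    exact AddSubgroup.mem_sSup_of_mem (Set.mem_image_of_mem _ hK)
      (smul_sub_mem_coinvariantsKer hgK x)
  obtain ⟨_, ⟨K, hK, rfl⟩, hyK⟩ := (AddSubgroup.mem_sSup_of_directedOn (hne.image _)
    (hc.mono_comp fun _ _ h => coinvariantsKer_mono h)).1 (hle hy)
  exact ⟨K, hK, hyK⟩

theorem exists_maximal_notMem_coinvariantsKer {m : M} (hm : m ≠ 0) :
    ∃ K : Subgroup G, Maximal (fun K => m ∉ coinvariantsKer M K) K := by
  obtain ⟨K, -, hK⟩ := zorn_le_nonempty₀ {K : Subgroup G | m ∉ coinvariantsKer M K}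
    (fun c hcm hc K hK => ⟨sSup c, fun hsup => by
      obtain ⟨L, hL, hmL⟩ := exists_mem_of_mem_coinvariantsKer_sSup ⟨K, hK⟩ hc.directedOn hsup
      exact hcm hL hmL, fun _ => le_sSup⟩)
    ⊥ (by simpa [coinvariantsKer_bot] using hm)
  exact ⟨K, hK⟩

theorem mem_coinvariantsKer_of_nsmul_mem {n : ℕ} (hn : Function.Bijective fun x : M => n • x)
    {H : Subgroup G} {x : M} (hx : n • x ∈ coinvariantsKer M H) : x ∈ coinvariantsKer M H := by
  have hdiv : coinvariantsKer M H ≤ (coinvariantsKer M H).map (nsmulAddMonoidHom n) := by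
    refine (AddSubgroup.closure_le _).2 ?_
    rintro _ ⟨g, x, rfl⟩
    obtain ⟨x, rfl⟩ := hn.2 x
    exact ⟨(g : G) • x - x, smul_sub_mem_coinvariantsKer g.2 x, by
      change n • ((g : G) • x - x) = (g : G) • (n • x) - n • x
      rw [smul_sub, smul_comm]⟩
  obtain ⟨y, hy, hyx⟩ := hdiv hx
  rwa [← hn.1 hyx]

end Coinvariants

theorem Subgroup.index_dvd_of_sup_zpowers_eq_top {G : Type*} [CommGroup G] {K : Subgroup G}
    {g : G} {n : ℕ} (hg : g ^ n = 1) (htop : K ⊔ zpowers g = ⊤) : K.index ∣ n := by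
  rw [← relIndex_top_right, ← htop, relIndex_sup_left]
  exact (relIndex_dvd_card K _).trans (Nat.card_zpowers g ▸ orderOf_dvd_of_pow_eq_one hg)

section CyclicNorm

variable {p : ℕ} {G : Type*} [CommGroup G] {M : Type*} [AddCommGroup M]
  [DistribMulAction G M]

theorem pow_val_natCast {h : G} (hh : h ^ p = 1) (k : ℕ) : h ^ (k : ZMod p).val = h ^ k := by
  conv_rhs => rw [← Nat.mod_add_div k p, pow_add, pow_mul, hh, one_pow, mul_one]
  rw [ZMod.val_natCast]

variable [NeZero p]

variable (p M) in
def cyclicNorm (h : G) : M →+ M :=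
  ∑ a : ZMod p, DistribSMul.toAddMonoidHom M (h ^ a.val)

theorem cyclicNorm_apply (h : G) (x : M) : cyclicNorm p M h x = ∑ a : ZMod p, h ^ a.val • x := by
  simp [cyclicNorm]

theorem cyclicNorm_pow_smul {h : G} (hh : h ^ p = 1) (n : ℕ) (x : M) :
    cyclicNorm p M h (h ^ n • x) = cyclicNorm p M h x := by
  have hshift : ∀ a : ZMod p, h ^ a.val * h ^ n = h ^ (a + n).val := fun a => by
    rw [← pow_add, ← pow_val_natCast hh, Nat.cast_add, ZMod.natCast_zmod_val]
  simp only [cyclicNorm_apply, smul_smul, hshift]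
  exact Fintype.sum_equiv (Equiv.addRight (n : ZMod p)) _ _ fun _ => rfl

theorem cyclicNorm_mem_coinvariantsKer {K : Subgroup G} (h : G) {y : M}
    (hy : y ∈ coinvariantsKer M K) : cyclicNorm p M h y ∈ coinvariantsKer M K := by
  rw [cyclicNorm_apply]
  exact AddSubgroup.sum_mem _ fun a _ => smul_mem_coinvariantsKer _ hy

theorem cyclicNorm_mem_of_mem_coinvariantsKer_sup {K : Subgroup G} {h : G} (hh : h ^ p = 1)
    {y : M} (hy : y ∈ coinvariantsKer M (K ⊔ zpowers h)) :
    cyclicNorm p M h y ∈ coinvariantsKer M K := by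
  have hle : coinvariantsKer M (K ⊔ zpowers h) ≤
      (coinvariantsKer M K).comap (cyclicNorm p M h) := by
    refine (AddSubgroup.closure_le _).2 ?_
    rintro _ ⟨⟨e, he⟩, x, rfl⟩
    obtain ⟨k, hk, z, hz, rfl⟩ := mem_sup.1 he
    have hfin : IsOfFinOrder h := isOfFinOrder_iff_pow_eq_one.2 ⟨p, NeZero.pos p, hh⟩
    obtain ⟨n, rfl⟩ := hfin.mem_powers_iff_mem_zpowers.2 hz
    have hsplit : (k * h ^ n) • x - x = (k • (h ^ n • x) - h ^ n • x) + (h ^ n • x - x) := by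
      rw [mul_smul]; abel
    change cyclicNorm p M h ((k * h ^ n) • x - x) ∈ coinvariantsKer M K
    rw [hsplit, map_add, map_sub (cyclicNorm p M h) (h ^ n • x),
      cyclicNorm_pow_smul hh, sub_self, add_zero]
    exact cyclicNorm_mem_coinvariantsKer h (smul_sub_mem_coinvariantsKer hk _)
  exact hle hy

variable [Fact p.Prime]

/-- The identity `∑_L N_L = p + N_{⟨g, g'⟩}` over the `p + 1` subgroups `L` of order `p` of
`⟨g, g'⟩ ≅ (ℤ/p)²`: every nontrivial element lies on exactly one of them. -/
theorem sum_cyclicNorm_mul_pow_add_cyclicNorm (g : G) {g' : G} (hg' : g' ^ p = 1) (x : M) :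
    ∑ b : ZMod p, cyclicNorm p M (g * g' ^ b.val) x + cyclicNorm p M g' x =
      p • x + cyclicNorm p M g (cyclicNorm p M g' x) := by
  have hinner : ∀ a : ZMod p, g ^ a.val • ∑ b : ZMod p, g' ^ (b.val * a.val) • x =
      g ^ a.val • cyclicNorm p M g' x + if a = 0 then p • x - cyclicNorm p M g' x else 0 := by
    intro a
    rcases eq_or_ne a 0 with rfl | ha
    · simp [ZMod.card]
    have hmul : ∀ b : ZMod p, g' ^ (b.val * a.val) = g' ^ (b * a).val := fun b => by
      rw [← pow_val_natCast hg', Nat.cast_mul, ZMod.natCast_zmod_val, ZMod.natCast_zmod_val]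
    simp only [hmul, cyclicNorm_apply, if_neg ha, add_zero]
    exact congrArg _ (Fintype.sum_equiv (Equiv.mulRight₀ a ha) _ _ fun _ => rfl)
  calc ∑ b : ZMod p, cyclicNorm p M (g * g' ^ b.val) x + cyclicNorm p M g' x
      = ∑ a : ZMod p, g ^ a.val • ∑ b : ZMod p, g' ^ (b.val * a.val) • x +
          cyclicNorm p M g' x := by
        simp only [cyclicNorm_apply, mul_pow, ← pow_mul, mul_smul, Finset.smul_sum]
        rw [Finset.sum_comm]
    _ = p • x + cyclicNorm p M g (cyclicNorm p M g' x) := by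
        simp only [hinner, Finset.sum_add_distrib, Finset.sum_ite_eq', Finset.mem_univ, if_true,
          cyclicNorm_apply g]
        abel

theorem mul_pow_val_notMem {K : Subgroup G} {g g' : G} (hg : g ∉ K)
    (hg' : g' ∉ K ⊔ zpowers g) (hg'p : g' ^ p = 1) (b : ZMod p) : g * g' ^ b.val ∉ K := by
  intro hmem
  rcases eq_or_ne b 0 with rfl | hb
  · exact hg (by simpa using hmem)
  have hpow : g' ^ b.val ∈ K ⊔ zpowers g := by
    simpa using mul_mem (mem_sup_right (inv_mem (mem_zpowers g))) (mem_sup_left hmem)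
  have hroot : (g' ^ b.val) ^ (b⁻¹).val = g' := by
    rw [← pow_mul, ← pow_val_natCast hg'p, Nat.cast_mul, ZMod.natCast_zmod_val,
      ZMod.natCast_zmod_val, mul_inv_cancel₀ hb, ZMod.val_one, pow_one]
  exact hg' (hroot ▸ pow_mem hpow _)

theorem mem_coinvariantsKer_of_forall_mem_sup_zpowers (hG : ∀ h : G, h ^ p = 1)
    (hbij : Function.Bijective fun x : M => p • x) {K : Subgroup G} {g g' : G} (hg : g ∉ K)
    (hg' : g' ∉ K ⊔ zpowers g) {m : M}
    (hm : ∀ h ∉ K, m ∈ coinvariantsKer M (K ⊔ zpowers h)) : m ∈ coinvariantsKer M K := by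
  have hnorm : ∀ h ∉ K, cyclicNorm p M h m ∈ coinvariantsKer M K := fun h hh =>
    cyclicNorm_mem_of_mem_coinvariantsKer_sup (hG h) (hm h hh)
  have hg'K : cyclicNorm p M g' m ∈ coinvariantsKer M K :=
    hnorm g' fun h => hg' (mem_sup_left h)
  refine mem_coinvariantsKer_of_nsmul_mem hbij ?_
  rw [eq_sub_of_add_eq (sum_cyclicNorm_mul_pow_add_cyclicNorm g (hG g') m).symm]
  exact sub_mem (add_mem (AddSubgroup.sum_mem _ fun b _ =>
    hnorm _ (mul_pow_val_notMem hg hg' (hG g') b)) hg'K) (cyclicNorm_mem_coinvariantsKer g hg'K)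

end CyclicNorm

theorem stmt13 (p : ℕ) (hp : p.Prime) (G : Type) [CommGroup G]
    (hG : ∀ g : G, g ^ p = 1)
    (M : Type) [AddCommGroup M] [DistribMulAction G M]
    (hbij : Function.Bijective fun x : M => p • x)
    (m : M) (hm : m ≠ 0) :
    ∃ H : Subgroup G, (H.index = 1 ∨ H.index = p) ∧
      m ∉ AddSubgroup.closure {y : M | ∃ (g : H) (x : M), y = (g : G) • x - x} := by
  have : Fact p.Prime := ⟨hp⟩
  by_contra! hcon
  obtain ⟨K, hK⟩ := exists_maximal_notMem_coinvariantsKer (G := G) hm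
  have hnotop : ∀ g : G, K ⊔ zpowers g ≠ ⊤ := fun g htop =>
    hK.1 (hcon K ((Nat.dvd_prime hp).1 (index_dvd_of_sup_zpowers_eq_top (hG g) htop)))
  obtain ⟨g, hg⟩ := SetLike.exists_not_mem_of_ne_top K (by simpa using hnotop 1)
  obtain ⟨g', hg'⟩ := SetLike.exists_not_mem_of_ne_top _ (hnotop g)
  refine hK.1 (mem_coinvariantsKer_of_forall_mem_sup_zpowers hG hbij hg hg' fun h hh => ?_)
  by_contra hmh
  exact hh (hK.2 hmh le_sup_left (mem_sup_right (mem_zpowers h)))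
end

section
/- Let $G$ be a finite group, let $p$ be a prime, and let $M$ be a $\mathbb{Z}[G]$-module whose underlying abelian group is free of finite rank. If $M \otimes_{\mathbb{Z}} \overline{\mathbb{F}}_p$ is an irreducible representation of $G$ over an algebraic closure $\overline{\mathbb{F}}_p$ of $\mathbb{F}_p$, then for every field $\mathbb{F}$ of characteristic $0$, the representation $M \otimes_{\mathbb{Z}} \mathbb{F}$ of $G$ is irreducible. -/
/-!
Over the algebraically closed field `k = 𝔽̄_p`, Burnside's theorem turns irreducibility of
`k ⊗ M` into the statement that the matrices of `G`, written in a `ℤ`-basis of `M`, span all of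
`Mₙ(k)`. Spanning is witnessed by an `n² × n²` minor of the integer coefficient matrix that is
nonzero in `k`; this minor is then a nonzero integer, hence nonzero in every field `F` of
characteristic zero, so the matrices of `G` span `Mₙ(F)` as well, and a subspace of `F ⊗ M`
stable under all endomorphisms is `0` or everything.
-/

open TensorProduct

/-- For a group `G` acting on an abelian group `M` (i.e. a `ℤ[G]`-module `M`) and a field `K`,
this says that `K ⊗_ℤ M` (with `G` acting through the factor `M`) is an irreducible
representation of `G` over `K`: it is nonzero and its only `G`-stable `K`-subspaces are `0`
and everything. -/
def IsIrreducibleBaseChange (G : Type) [Group G] (M : Type) [AddCommGroup M]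
    [DistribMulAction G M] (K : Type) [Field K] : Prop :=
  Nontrivial (K ⊗[ℤ] M) ∧
    ∀ V : Submodule K (K ⊗[ℤ] M),
      (∀ g : G, ∀ v ∈ V,
        (LinearMap.lTensor K (DistribMulAction.toAddMonoidHom M g).toIntLinearMap) v ∈ V) →
      V = ⊥ ∨ V = ⊤

open Module

section Burnside

variable {k V : Type*} [Field k] [AddCommGroup V] [Module k V]

-- Burnside: by Schur every `k`-linear map is `End S V`-linear, so Jacobson density puts it in `S`.
theorem Subalgebra.eq_top_of_isSimpleModule [IsAlgClosed k] [FiniteDimensional k V]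
    (S : Subalgebra k (End k V)) [IsSimpleModule S V] : S = ⊤ := by
  have schur := IsSimpleModule.algebraMap_end_bijective_of_isAlgClosed k (A := S) (V := V)
  have : Module.Finite (End S V) V := .of_restrictScalars_finite k _ _
  refine eq_top_iff.mpr fun f _ => ?_
  let f' : End (End S V) V :=
    { toFun := f
      map_add' := f.map_add
      map_smul' := fun φ v => by
        obtain ⟨c, rfl⟩ := schur.2 φ
        exact f.map_smul c v }
  obtain ⟨s, hs⟩ := Module.Finite.toModuleEnd_moduleEnd_surjective (R := S) (M := V) f'
  have : (s : End k V) = f := LinearMap.ext fun v => congr($hs v)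
  exact this ▸ s.2

variable {G : Type*} [Monoid G]

theorem isSimpleModule_adjoin_range [Nontrivial V] (ρ : Representation k G V)
    (hρ : ∀ W : Submodule k V, (∀ g, ∀ v ∈ W, ρ g v ∈ W) → W = ⊥ ∨ W = ⊤) :
    IsSimpleModule (Algebra.adjoin k (Set.range ρ)) V := by
  rw [isSimpleModule_iff]
  refine { eq_bot_or_eq_top := fun N => ?_ }
  have := hρ (N.restrictScalars k) fun g v hv =>
    N.smul_mem ⟨ρ g, Algebra.subset_adjoin ⟨g, rfl⟩⟩ hv
  rwa [Submodule.restrictScalars_eq_bot_iff, Submodule.restrictScalars_eq_top_iff] at this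

theorem span_range_eq_toSubmodule_adjoin (ρ : Representation k G V) :
    Submodule.span k (Set.range ρ) =
      Subalgebra.toSubmodule (Algebra.adjoin k (Set.range ρ)) := by
  rw [Algebra.adjoin_eq_span, ← MonoidHom.coe_mrange, Submonoid.closure_eq]

theorem span_range_eq_top_of_irreducible [IsAlgClosed k] [FiniteDimensional k V] [Nontrivial V]
    (ρ : Representation k G V)
    (hρ : ∀ W : Submodule k V, (∀ g, ∀ v ∈ W, ρ g v ∈ W) → W = ⊥ ∨ W = ⊤) :
    Submodule.span k (Set.range ρ) = ⊤ := by
  have := isSimpleModule_adjoin_range ρ hρ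
  rw [span_range_eq_toSubmodule_adjoin, Subalgebra.eq_top_of_isSimpleModule (Algebra.adjoin k _),
    Algebra.top_toSubmodule]

end Burnside

theorem Submodule.eq_bot_or_eq_top_of_span_eq_top {F V : Type*} [Field F] [AddCommGroup V]
    [Module F V] [Nontrivial V] {S : Set (End F V)} (hS : span F S = ⊤) (W : Submodule F V)
    (hW : ∀ f ∈ S, ∀ v ∈ W, f v ∈ W) : W = ⊥ ∨ W = ⊤ := by
  have hall : ∀ f : End F V, ∀ v ∈ W, f v ∈ W := fun f v hv =>
    (hS ▸ span_le.mpr hW : ⊤ ≤ W.compatibleMaps W) trivial hv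
  let W' : Submodule (End F V) V := { W with smul_mem' := fun f v hv => hall f v hv }
  have hW' : W'.restrictScalars F = W := rfl
  rw [← hW', restrictScalars_eq_bot_iff, restrictScalars_eq_top_iff]
  exact eq_bot_or_eq_top W'

section RowSpan

variable {G n : Type*} [Fintype n]

theorem exists_isUnit_of_span_range_eq_top [DecidableEq n] {K : Type*} [Field K]
    {w : G → n → K} (hw : Submodule.span K (Set.range w) = ⊤) :
    ∃ s : n → G, IsUnit (Matrix.of fun i => w (s i)) := by
  obtain ⟨κ, a, -, hsp, hli⟩ := exists_linearIndependent' K w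
  let b : Basis κ K (n → K) := .mk hli (by rw [hsp, hw])
  let e : n ≃ κ := (Pi.basisFun K n).indexEquiv b
  exact ⟨a ∘ e, Matrix.linearIndependent_rows_iff_isUnit.mp (hli.comp e e.injective)⟩

theorem span_range_eq_top_of_isUnit [DecidableEq n] {K : Type*} [Field K] {w : G → n → K}
    {s : n → G} (hs : IsUnit (Matrix.of fun i => w (s i))) :
    Submodule.span K (Set.range w) = ⊤ := by
  have hli := Matrix.linearIndependent_rows_iff_isUnit.mpr hs
  refine top_le_iff.mp ?_
  calc ⊤ = Submodule.span K (Set.range (w ∘ s)) :=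
        (hli.span_eq_top_of_card_eq_finrank' (finrank_fintype_fun_eq_card K).symm).symm
    _ ≤ _ := Submodule.span_mono (Set.range_comp_subset_range s w)

theorem Matrix.isUnit_map_intCast_iff [DecidableEq n] {K : Type*} [Field K] (B : Matrix n n ℤ) :
    IsUnit (B.map ((↑) : ℤ → K)) ↔ (B.det : K) ≠ 0 := by
  rw [Matrix.isUnit_iff_isUnit_det, Int.cast_det, isUnit_iff_ne_zero]

theorem span_range_intCast_eq_top_of_charZero {K F : Type*} [Field K] [Field F]
    [CharZero F] {v : G → n → ℤ}
    (hK : Submodule.span K (Set.range fun g => ((↑) ∘ v g : n → K)) = ⊤) :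
    Submodule.span F (Set.range fun g => ((↑) ∘ v g : n → F)) = ⊤ := by
  classical
  obtain ⟨s, hs⟩ := exists_isUnit_of_span_range_eq_top hK
  let B : Matrix n n ℤ := .of fun i => v (s i)
  have hB : B.det ≠ 0 := fun h => B.isUnit_map_intCast_iff.mp hs (by rw [h, Int.cast_zero])
  exact span_range_eq_top_of_isUnit (s := s)
    (B.isUnit_map_intCast_iff.mpr (Int.cast_ne_zero.mpr hB))

end RowSpan

section IntBaseChange

variable (G M K : Type*) [Monoid G] [AddCommGroup M] [DistribMulAction G M] [CommRing K]

-- Pointwise this is definitionally the `lTensor` map occurring in `IsIrreducibleBaseChange`.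
def intBaseChangeRep : Representation K G (K ⊗[ℤ] M) :=
  (End.baseChangeHom ℤ K M).toMonoidHom.comp (DistribMulAction.toModuleEnd ℤ M)

variable {G M K}

theorem intBaseChangeRep_apply (g : G) :
    intBaseChangeRep G M K g = (DistribMulAction.toModuleEnd ℤ M g).baseChange K := rfl

theorem equivFun_intBaseChangeRep {ι : Type*} [Fintype ι] [DecidableEq ι] (b : Basis ι ℤ M)
    (g : G) :
    ((Algebra.TensorProduct.basis K b).linearMap (Algebra.TensorProduct.basis K b)).equivFun
      (intBaseChangeRep G M K g) =
      (↑) ∘ (b.linearMap b).equivFun (DistribMulAction.toModuleEnd ℤ M g) := by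
  ext q
  rw [Function.comp_apply, Basis.equivFun_apply, Basis.equivFun_apply,
    Basis.linearMap_repr_apply, Basis.linearMap_repr_apply, intBaseChangeRep_apply,
    LinearMap.toMatrix_baseChange]
  simp [Matrix.stdBasis]

theorem span_range_intBaseChangeRep_eq_top_iff {ι : Type*} [Fintype ι] [DecidableEq ι]
    {K : Type*} [Field K] (b : Basis ι ℤ M) :
    Submodule.span K (Set.range (intBaseChangeRep G M K)) = ⊤ ↔
      Submodule.span K (Set.range fun g : G =>
        ((↑) ∘ (b.linearMap b).equivFun (DistribMulAction.toModuleEnd ℤ M g) :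
          ι × ι → K)) = ⊤ := by
  let bK := Algebra.TensorProduct.basis K b
  rw [← Submodule.map_eq_top_iff (e := (bK.linearMap bK).equivFun), Submodule.map_span,
    ← Set.range_comp, LinearEquiv.coe_coe, Function.comp_def]
  simp only [bK, equivFun_intBaseChangeRep]

end IntBaseChange

theorem nontrivial_tensorProduct_iff_finrank_pos {R K N : Type*} [CommRing R]
    [StrongRankCondition R] [Field K] [Algebra R K] [AddCommGroup N] [Module R N] [Module.Free R N]
    [Module.Finite R N] :
    Nontrivial (K ⊗[R] N) ↔ 0 < finrank R N := by
  rw [← finrank_pos_iff (R := K), finrank_baseChange]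

section IsIrreducibleBaseChange

variable {G M : Type} [Group G] [AddCommGroup M] [DistribMulAction G M]

theorem IsIrreducibleBaseChange.span_range_eq_top {k : Type} [Field k] [IsAlgClosed k]
    [Module.Finite ℤ M] (hirr : IsIrreducibleBaseChange G M k) :
    Submodule.span k (Set.range (intBaseChangeRep G M k)) = ⊤ :=
  have := hirr.1
  span_range_eq_top_of_irreducible _ hirr.2

theorem isIrreducibleBaseChange_of_span_range_eq_top {F : Type} [Field F]
    [Nontrivial (F ⊗[ℤ] M)] (hF : Submodule.span F (Set.range (intBaseChangeRep G M F)) = ⊤) :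
    IsIrreducibleBaseChange G M F :=
  ⟨‹_›, fun W hW => Submodule.eq_bot_or_eq_top_of_span_eq_top hF W <| by
    rintro _ ⟨g, rfl⟩
    exact hW g⟩

theorem span_range_intBaseChangeRep_eq_top_of_charZero [Module.Free ℤ M] [Module.Finite ℤ M]
    {K F : Type} [Field K] [Field F] [CharZero F]
    (hK : Submodule.span K (Set.range (intBaseChangeRep G M K)) = ⊤) :
    Submodule.span F (Set.range (intBaseChangeRep G M F)) = ⊤ := by
  classical
  let b := Free.chooseBasis ℤ M
  exact (span_range_intBaseChangeRep_eq_top_iff b).mpr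
    (span_range_intCast_eq_top_of_charZero ((span_range_intBaseChangeRep_eq_top_iff b).mp hK))

end IsIrreducibleBaseChange

theorem stmt15_general (G : Type) [Group G] (p : ℕ) [Fact p.Prime]
    (M : Type) [AddCommGroup M] [DistribMulAction G M]
    [Module.Free ℤ M] [Module.Finite ℤ M]
    (hirr : IsIrreducibleBaseChange G M (AlgebraicClosure (ZMod p)))
    (F : Type) [Field F] [CharZero F] :
    IsIrreducibleBaseChange G M F := by
  have : Nontrivial (F ⊗[ℤ] M) :=
    nontrivial_tensorProduct_iff_finrank_pos.mpr <|
      nontrivial_tensorProduct_iff_finrank_pos.mp hirr.1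
  exact isIrreducibleBaseChange_of_span_range_eq_top
    (span_range_intBaseChangeRep_eq_top_of_charZero hirr.span_range_eq_top)

theorem stmt15 (G : Type) [Group G] [Finite G] (p : ℕ) [Fact p.Prime]
    (M : Type) [AddCommGroup M] [DistribMulAction G M]
    [Module.Free ℤ M] [Module.Finite ℤ M]
    (hirr : IsIrreducibleBaseChange G M (AlgebraicClosure (ZMod p)))
    (F : Type) [Field F] [CharZero F] :
    IsIrreducibleBaseChange G M F :=
  stmt15_general G p M hirr F
end
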